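/- For any vertex u of FDSC_n (n = 2^d, d ≥ 2) and any two distinct neighbors v, w of u, v and w have at most one common neighbor other than u. -/

import Mathlib

open scoped Classical

namespace FDSC

/-- Vertices of `FDSC_n` with `n = 2^d`: binary strings of length `2^d`. -/
abbrev V (d : ℕ) : Type := Fin (2 ^ d) → Bool

/-- Bit `i` of a vertex (out-of-range bits are `false`). -/
def get {d : ℕ} (u : V d) (i : ℕ) : Bool :=
  if h : i < 2 ^ d then u ⟨i, h⟩ else false

def ofFun {d : ℕ} (f : ℕ → Bool) : V d := fun i => f i

/-- Flip bit `i`. -/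
def flip {d : ℕ} (i : ℕ) (u : V d) : V d :=
  ofFun (fun j => if j = i then !(get u j) else get u j)

/-- The two initial blocks of length `L` coincide (`m₁ = m₂`). -/
def sameHalves {d : ℕ} (L : ℕ) (u : V d) : Prop :=
  ∀ i < L, get u i = get u (i + L)

/-- Swap the two initial blocks of length `L` (`m₂ m₁ m₃`). -/
def swapHalves {d : ℕ} (L : ℕ) (u : V d) : V d :=
  ofFun (fun i => if i < L then get u (i + L)
    else if i < 2 * L then get u (i - L) else get u i)

/-- Complement the two initial blocks of length `L` (`m̄₁ m̄₂ m₃`). -/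
def complHalves {d : ℕ} (L : ℕ) (u : V d) : V d :=
  ofFun (fun i => if i < 2 * L then !(get u i) else get u i)

/-- Divide-and-swap neighbor for block length `L`. -/
noncomputable def dsNeighbor {d : ℕ} (L : ℕ) (u : V d) : V d :=
  if sameHalves L u then complHalves L u else swapHalves L u

/-- Adjacency in `FDSC_n`: the `e(1)`-edge (flip first bit), the `e(f)`-edge
(flip second bit), and the `e(2n/2^k)`-edges for `1 ≤ k ≤ d`. -/
def PreAdj {d : ℕ} (u v : V d) : Prop :=
  u ≠ v ∧ (v = flip 0 u ∨ v = flip 1 u ∨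
    ∃ k, 1 ≤ k ∧ k ≤ d ∧ v = dsNeighbor (2 ^ (d - k)) u)

/-- The folded divide-and-swap cube `FDSC_n`, `n = 2^d`. -/
noncomputable def graph (d : ℕ) : SimpleGraph (V d) where
  Adj u v := PreAdj u v ∨ PreAdj v u
  symm := ⟨fun _ _ h => h.symm⟩
  loopless := ⟨fun u h => by
    rcases h with h | h <;> exact h.1 rfl⟩

/-- Module addresses: binary strings of length `n/2 = 2^(d-1)`. -/
abbrev W (d : ℕ) : Type := Fin (2 ^ (d - 1)) → Bool

def getW {d : ℕ} (B : W d) (i : ℕ) : Bool :=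
  if h : i < 2 ^ (d - 1) then B ⟨i, h⟩ else false

/-- The vertex `A B` (inside-address `A`, module address `B`). -/
def concat {d : ℕ} (A B : W d) : V d :=
  ofFun (fun i => if i < 2 ^ (d - 1) then getW A i else getW B (i - 2 ^ (d - 1)))

/-- The module address of a vertex (its second half). -/
def secondHalf {d : ℕ} (u : V d) : W d :=
  fun i => get u ((i : ℕ) + 2 ^ (d - 1))

/-- Bitwise complement of a module address. -/
def complW {d : ℕ} (B : W d) : W d := fun i => !(B i)

/-- The external neighbor of a vertex: the `e(n)`-edge endpoint (`k = 1`). -/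
noncomputable def extNeighbor {d : ℕ} (u : V d) : V d :=
  dsNeighbor (2 ^ (d - 1)) u

/-- The star `K_{1,m}` with center `0`. -/
def star (m : ℕ) : SimpleGraph (Fin (m + 1)) where
  Adj i j := (i = 0 ∧ j ≠ 0) ∨ (j = 0 ∧ i ≠ 0)
  symm := ⟨fun _ _ h => h.symm⟩
  loopless := ⟨fun i h => by
    rcases h with ⟨h1, h2⟩ | ⟨h1, h2⟩ <;> exact h2 h1⟩

/-- Deleting the vertex set `R` disconnects the graph or leaves a trivial graph. -/
def Disconnects {α : Type*} (G : SimpleGraph α) (R : Set α) : Prop :=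
  ¬ (G.induce Rᶜ).Connected ∨ Rᶜ.Subsingleton

/-- `H`-structure connectivity: minimum number of subgraphs of `G`, each
isomorphic to `H`, whose vertex deletion disconnects `G` or leaves a trivial graph. -/
noncomputable def structConn {α β : Type*} (G : SimpleGraph α) (H : SimpleGraph β) : ℕ :=
  sInf { k | ∃ F : Finset G.Subgraph, F.card = k ∧
    (∀ S ∈ F, Nonempty (S.coe ≃g H)) ∧
    Disconnects G (⋃ S ∈ F, S.verts) }

/-- `H`-substructure connectivity: members are isomorphic to connected subgraphs of `H`. -/
noncomputable def substructConn {α β : Type*} (G : SimpleGraph α) (H : SimpleGraph β) : ℕ :=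
  sInf { k | ∃ F : Finset G.Subgraph, F.card = k ∧
    (∀ S ∈ F, S.coe.Connected ∧ ∃ H' : H.Subgraph, Nonempty (S.coe ≃g H'.coe)) ∧
    Disconnects G (⋃ S ∈ F, S.verts) }

/-! ### Auxiliary development for stmt9 -/

section Stmt9Aux

variable {d : ℕ}

theorem get_lt {u : V d} {i : ℕ} (h : i < 2 ^ d) : get u i = u ⟨i, h⟩ := dif_pos h

theorem get_ge {u : V d} {i : ℕ} (h : ¬ i < 2 ^ d) : get u i = false := dif_neg h

theorem V.ext {u v : V d} (h : ∀ i, get u i = get v i) : u = v := by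
  funext i
  have h' := h i
  rwa [get_lt i.isLt, get_lt i.isLt] at h'

theorem get_ofFun {f : ℕ → Bool} {i : ℕ} :
    get (ofFun f : V d) i = if i < 2 ^ d then f i else false := by
  by_cases h : i < 2 ^ d <;> simp [get, ofFun, h]

theorem get_flip {u : V d} {b i : ℕ} :
    get (flip b u) i = if i = b ∧ i < 2 ^ d then !(get u i) else get u i := by
  rw [flip, get_ofFun]
  by_cases h : i < 2 ^ d
  · by_cases hb : i = b
    · subst hb; simp [h]
    · simp [h, hb]
  · simp [h, get_ge h]

theorem get_compl {u : V d} {L i : ℕ} (h2 : 2 * L ≤ 2 ^ d) :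
    get (complHalves L u) i = if i < 2 * L then !(get u i) else get u i := by
  rw [complHalves, get_ofFun]
  by_cases h : i < 2 ^ d
  · simp [h]
  · have h' : ¬ i < 2 * L := fun hc => h (lt_of_lt_of_le hc h2)
    simp [h, h', get_ge h]

theorem get_swap {u : V d} {L i : ℕ} (h2 : 2 * L ≤ 2 ^ d) :
    get (swapHalves L u) i =
      if i < L then get u (i + L) else if i < 2 * L then get u (i - L) else get u i := by
  rw [swapHalves, get_ofFun]
  by_cases h : i < 2 ^ d
  · simp [h]
  · have h3 : ¬ i < 2 * L := fun hc => h (lt_of_lt_of_le hc h2)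
    have h1 : ¬ i < L := by omega
    simp [h, h1, h3, get_ge h]

theorem flip_flip {u : V d} {b : ℕ} : flip b (flip b u) = u := by
  apply V.ext; intro i
  rw [get_flip, get_flip]
  by_cases h : i = b ∧ i < 2 ^ d
  · obtain ⟨rfl, hlt⟩ := h
    simp [hlt]
  · simp [h]

theorem compl_compl {u : V d} {L : ℕ} (h2 : 2 * L ≤ 2 ^ d) :
    complHalves L (complHalves L u) = u := by
  apply V.ext; intro i
  rw [get_compl h2, get_compl h2]
  by_cases h : i < 2 * L <;> simp [h]

theorem swap_swap {u : V d} {L : ℕ} (h2 : 2 * L ≤ 2 ^ d) :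
    swapHalves L (swapHalves L u) = u := by
  apply V.ext; intro i
  rw [get_swap h2]
  by_cases h1 : i < L
  · rw [if_pos h1, get_swap h2, if_neg (by omega), if_pos (by omega), Nat.add_sub_cancel]
  · by_cases h3 : i < 2 * L
    · rw [if_neg h1, if_pos h3, get_swap h2, if_pos (by omega), Nat.sub_add_cancel (by omega)]
    · rw [if_neg h1, if_neg h3, get_swap h2, if_neg h1, if_neg h3]

theorem sameHalves_compl {u : V d} {L : ℕ} (h2 : 2 * L ≤ 2 ^ d) (h : sameHalves L u) :
    sameHalves L (complHalves L u) := by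
  intro i hi
  rw [get_compl h2, get_compl h2, if_pos (by omega), if_pos (by omega), h i hi]

theorem not_sameHalves_swap {u : V d} {L : ℕ} (h2 : 2 * L ≤ 2 ^ d) (h : ¬ sameHalves L u) :
    ¬ sameHalves L (swapHalves L u) := by
  intro hs
  apply h
  intro i hi
  have h' := hs i hi
  rw [get_swap h2, get_swap h2, if_pos hi, if_neg (by omega), if_pos (by omega),
    Nat.add_sub_cancel] at h'
  exact h'.symm

theorem dsNeighbor_invol {u : V d} {L : ℕ} (h2 : 2 * L ≤ 2 ^ d) :
    dsNeighbor L (dsNeighbor L u) = u := by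
  by_cases h : sameHalves L u
  · have e : dsNeighbor L u = complHalves L u := by rw [dsNeighbor, if_pos h]
    rw [e, dsNeighbor, if_pos (sameHalves_compl h2 h), compl_compl h2]
  · have e : dsNeighbor L u = swapHalves L u := by rw [dsNeighbor, if_neg h]
    rw [e, dsNeighbor, if_neg (not_sameHalves_swap h2 h), swap_swap h2]

theorem pow_bound {k : ℕ} (hk : 1 ≤ k) (hkd : k ≤ d) : 2 * 2 ^ (d - k) ≤ 2 ^ d := by
  have h1 : 2 * 2 ^ (d - k) = 2 ^ (d - k + 1) := by rw [pow_succ]; ring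
  rw [h1]
  exact Nat.pow_le_pow_right (by norm_num) (by omega)

theorem adj_gen {v x : V d} (h : (graph d).Adj v x) :
    x = flip 0 v ∨ x = flip 1 v ∨ ∃ k, 1 ≤ k ∧ k ≤ d ∧ x = dsNeighbor (2 ^ (d - k)) v := by
  have h' : PreAdj v x ∨ PreAdj x v := h
  rcases h' with ⟨-, h'⟩ | ⟨-, h'⟩
  · exact h'
  · rcases h' with h' | h' | ⟨k, hk1, hkd, h'⟩
    · left; rw [h', flip_flip]
    · right; left; rw [h', flip_flip]
    · right; right
      exact ⟨k, hk1, hkd, by rw [h', dsNeighbor_invol (pow_bound hk1 hkd)]⟩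

/-- XOR difference of two vertices, as a function on `ℕ`. -/
def dvec {d : ℕ} (v x : V d) : ℕ → Bool := fun i => xor (get v i) (get x i)

theorem dvec_eq {v x : V d} (h : ∀ i, dvec v x i = false) : v = x := by
  apply V.ext; intro i
  have h' := h i
  revert h'
  show xor (get v i) (get x i) = false → get v i = get x i
  cases get v i <;> cases get x i <;> decide

theorem dvec_inj {v u x : V d} (h : ∀ i, dvec v u i = dvec v x i) : u = x := by
  apply V.ext; intro i
  have h' := h i
  revert h'
  show xor (get v i) (get u i) = xor (get v i) (get x i) → get u i = get x i
  cases get v i <;> cases get u i <;> cases get x i <;> decide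

theorem dvec_xor {v w x : V d} (i : ℕ) :
    dvec v w i = xor (dvec v x i) (dvec w x i) := by
  show xor (get v i) (get w i) = xor (xor (get v i) (get x i)) (xor (get w i) (get x i))
  cases get v i <;> cases get w i <;> cases get x i <;> rfl

/-- Support bounded: all bits at positions `≥ n` are zero. -/
def SuppLt (n : ℕ) (δ : ℕ → Bool) : Prop := ∀ i, n ≤ i → δ i = false

def Nonzero (δ : ℕ → Bool) : Prop := ∃ i, δ i = true

def Sym (L : ℕ) (δ : ℕ → Bool) : Prop := ∀ i < L, δ i = δ (i + L)

/-- The "top block" of `δ` is `[2^j, 2^(j+1))`. -/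
def TopAt (j : ℕ) (δ : ℕ → Bool) : Prop :=
  (∃ i, 2 ^ j ≤ i ∧ δ i = true) ∧ SuppLt (2 ^ (j + 1)) δ

theorem two_le_pow {j : ℕ} (hj : 1 ≤ j) : 2 ≤ 2 ^ j := by
  calc (2:ℕ) = 2 ^ 1 := rfl
  _ ≤ 2 ^ j := Nat.pow_le_pow_right (by norm_num) hj

theorem topAt_of_big {δ : ℕ → Bool} {j : ℕ} (hsym : Sym (2 ^ j) δ)
    (hsupp : SuppLt (2 ^ (j + 1)) δ) (hnz : Nonzero δ) : TopAt j δ := by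
  obtain ⟨i, hi⟩ := hnz
  refine ⟨?_, hsupp⟩
  by_cases h : 2 ^ j ≤ i
  · exact ⟨i, h, hi⟩
  · exact ⟨i + 2 ^ j, by omega, by rw [← hsym i (by omega)]; exact hi⟩

theorem topAt_unique {δ : ℕ → Bool} {j j' : ℕ} (h : TopAt j δ) (h' : TopAt j' δ) : j = j' := by
  by_contra hne
  wlog hlt : j < j' generalizing j j'
  · exact this h' h (Ne.symm hne) (by omega)
  obtain ⟨⟨i, hi, hit⟩, -⟩ := h'
  have hf := h.2 i (le_trans (Nat.pow_le_pow_right (by norm_num) (by omega)) hi)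
  rw [hf] at hit
  exact Bool.false_ne_true hit

theorem topAt_not_small {δ : ℕ → Bool} {j : ℕ} (hj : 1 ≤ j) (h : TopAt j δ)
    (hs : SuppLt 2 δ) : False := by
  obtain ⟨⟨i, hi, hit⟩, -⟩ := h
  have hf := hs i (le_trans (two_le_pow hj) hi)
  rw [hf] at hit
  exact Bool.false_ne_true hit

theorem xor_ne {a b : Bool} (h : a ≠ b) : xor a b = true := by
  cases a <;> cases b <;> simp_all

theorem dvec_flip {v : V d} {b : ℕ} (hb : b < 2 ^ d) (i : ℕ) :
    dvec v (flip b v) i = if i = b then true else false := by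
  show xor (get v i) (get (flip b v) i) = _
  rw [get_flip]
  by_cases h : i = b
  · subst h
    simp [hb]
  · simp [h]

theorem dvec_ds {v : V d} {L : ℕ} (hL : 1 ≤ L) (h2 : 2 * L ≤ 2 ^ d) :
    Sym L (dvec v (dsNeighbor L v)) ∧ SuppLt (2 * L) (dvec v (dsNeighbor L v)) ∧
      Nonzero (dvec v (dsNeighbor L v)) := by
  by_cases h : sameHalves L v
  · have e : dsNeighbor L v = complHalves L v := by rw [dsNeighbor, if_pos h]
    have key : ∀ i, dvec v (dsNeighbor L v) i = if i < 2 * L then true else false := by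
      intro i
      show xor (get v i) (get (dsNeighbor L v) i) = _
      rw [e, get_compl h2]
      by_cases hi : i < 2 * L <;> simp [hi]
    refine ⟨?_, ?_, ⟨0, ?_⟩⟩
    · intro i hi; rw [key, key, if_pos (by omega), if_pos (by omega)]
    · intro i hi; rw [key, if_neg (by omega)]
    · rw [key, if_pos (by omega)]
  · have e : dsNeighbor L v = swapHalves L v := by rw [dsNeighbor, if_neg h]
    have key : ∀ i, dvec v (dsNeighbor L v) i =
        if i < L then xor (get v i) (get v (i + L))
        else if i < 2 * L then xor (get v i) (get v (i - L)) else false := by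
      intro i
      show xor (get v i) (get (dsNeighbor L v) i) = _
      rw [e, get_swap h2]
      by_cases h1 : i < L
      · simp [h1]
      · by_cases h3 : i < 2 * L <;> simp [h1, h3]
    refine ⟨?_, ?_, ?_⟩
    · intro i hi
      rw [key, key, if_pos hi, if_neg (by omega), if_pos (by omega), Nat.add_sub_cancel,
        Bool.xor_comm]
    · intro i hi; rw [key, if_neg (by omega), if_neg (by omega)]
    · rw [sameHalves] at h
      push_neg at h
      obtain ⟨i, hi, hne⟩ := h
      exact ⟨i, by rw [key, if_pos hi]; exact xor_ne hne⟩

theorem two_le_pow_d (hd : 1 ≤ d) : 2 ≤ 2 ^ d := two_le_pow hd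

theorem dvec_flip_class {v x : V d} {b : ℕ} (hb : b < 2 ^ d) (hb2 : b < 2)
    (hx : x = flip b v) : SuppLt 2 (dvec v x) ∧ Nonzero (dvec v x) := by
  subst hx
  constructor
  · intro i hi; rw [dvec_flip hb, if_neg (by omega)]
  · exact ⟨b, by rw [dvec_flip hb, if_pos rfl]⟩

theorem pow_sub_succ {k : ℕ} (_hk : 1 ≤ k) (_hkd : k ≤ d) :
    2 * 2 ^ (d - k) = 2 ^ (d - k + 1) := by rw [pow_succ]; ring

/-- Classification of the difference vector of a neighbor. -/
theorem adj_class {v x : V d} (hd : 1 ≤ d) (h : (graph d).Adj v x) :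
    (SuppLt 2 (dvec v x) ∧ Nonzero (dvec v x)) ∨
      ∃ j, 1 ≤ j ∧ Sym (2 ^ j) (dvec v x) ∧ SuppLt (2 ^ (j + 1)) (dvec v x) ∧
        Nonzero (dvec v x) := by
  have h2d : (2:ℕ) ≤ 2 ^ d := two_le_pow_d hd
  rcases adj_gen h with h0 | h1 | ⟨k, hk1, hkd, hds⟩
  · exact Or.inl (dvec_flip_class (by omega) (by omega) h0)
  · exact Or.inl (dvec_flip_class (by omega) (by omega) h1)
  · obtain ⟨hsym, hsupp, hnz⟩ := dvec_ds (Nat.one_le_two_pow) (pow_bound hk1 hkd) (v := v)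
    rw [← hds] at hsym hsupp hnz
    by_cases hkdeq : k = d
    · left
      refine ⟨?_, hnz⟩
      intro i hi
      apply hsupp
      subst hkdeq
      simpa using hi
    · right
      refine ⟨d - k, by omega, hsym, ?_, hnz⟩
      rw [← pow_sub_succ hk1 hkd]
      exact hsupp

/-- A neighbor whose difference vector has its top block at `[2^j, 2^(j+1))`, `j ≥ 1`,
is forced to be the divide-and-swap neighbor at block length `2^j`. -/
theorem topAt_forces {v x : V d} (hd : 1 ≤ d) (h : (graph d).Adj v x) {j : ℕ} (hj : 1 ≤ j)
    (ht : TopAt j (dvec v x)) : x = dsNeighbor (2 ^ j) v := by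
  have h2d : (2:ℕ) ≤ 2 ^ d := two_le_pow_d hd
  rcases adj_gen h with h0 | h1 | ⟨k, hk1, hkd, hds⟩
  · exact absurd (dvec_flip_class (by omega) (by omega) h0).1 (fun hs => topAt_not_small hj ht hs)
  · exact absurd (dvec_flip_class (by omega) (by omega) h1).1 (fun hs => topAt_not_small hj ht hs)
  · obtain ⟨hsym, hsupp, hnz⟩ := dvec_ds (Nat.one_le_two_pow) (pow_bound hk1 hkd) (v := v)
    rw [← hds] at hsym hsupp hnz
    by_cases hkdeq : k = d
    · exfalso
      apply topAt_not_small hj ht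
      intro i hi
      apply hsupp
      subst hkdeq
      simpa using hi
    · rw [pow_sub_succ hk1 hkd] at hsupp
      have hjj : d - k = j := topAt_unique (topAt_of_big hsym hsupp hnz) ht
      rw [hds, hjj]

/-- Pair lemma: a common neighbor of `v` and `w` either has small differences to both,
or is a forced divide-and-swap neighbor, with the top block of `dvec v w` determined. -/
theorem pair_lemma {v w x : V d} (hd : 1 ≤ d) (hvx : (graph d).Adj v x)
    (hwx : (graph d).Adj w x) (hnz : Nonzero (dvec v w)) :
    (SuppLt 2 (dvec v w) ∧ SuppLt 2 (dvec v x) ∧ SuppLt 2 (dvec w x) ∧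
      Nonzero (dvec v x) ∧ Nonzero (dvec w x)) ∨
      ∃ j, 1 ≤ j ∧ TopAt j (dvec v w) ∧
        (x = dsNeighbor (2 ^ j) v ∨ x = dsNeighbor (2 ^ j) w) := by
  rcases adj_class hd hvx with ⟨hsv, hnv⟩ | ⟨a, ha1, hsyma, hsuppa, hnza⟩ <;>
    rcases adj_class hd hwx with ⟨hsw, hnw⟩ | ⟨b, hb1, hsymb, hsuppb, hnzb⟩
  · left
    refine ⟨?_, hsv, hsw, hnv, hnw⟩
    intro i hi
    rw [dvec_xor (x := x), hsv i hi, hsw i hi]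
    rfl
  · -- small / big b
    right
    have tb : TopAt b (dvec w x) := topAt_of_big hsymb hsuppb hnzb
    refine ⟨b, hb1, ⟨?_, ?_⟩, Or.inr (topAt_forces hd hwx hb1 tb)⟩
    · obtain ⟨i, hi, hit⟩ := tb.1
      refine ⟨i, hi, ?_⟩
      rw [dvec_xor (x := x), hsv i (le_trans (two_le_pow hb1) hi), hit]
      rfl
    · intro i hi
      rw [dvec_xor (x := x), hsv i (le_trans (two_le_pow (by omega)) hi), hsuppb i hi]
      rfl
  · -- big a / small
    right
    have ta : TopAt a (dvec v x) := topAt_of_big hsyma hsuppa hnza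
    refine ⟨a, ha1, ⟨?_, ?_⟩, Or.inl (topAt_forces hd hvx ha1 ta)⟩
    · obtain ⟨i, hi, hit⟩ := ta.1
      refine ⟨i, hi, ?_⟩
      rw [dvec_xor (x := x), hsw i (le_trans (two_le_pow ha1) hi), hit]
      rfl
    · intro i hi
      rw [dvec_xor (x := x), hsw i (le_trans (two_le_pow (by omega)) hi), hsuppa i hi]
      rfl
  · -- big a / big b
    right
    have ta : TopAt a (dvec v x) := topAt_of_big hsyma hsuppa hnza
    have tb : TopAt b (dvec w x) := topAt_of_big hsymb hsuppb hnzb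
    rcases lt_trichotomy a b with hab | rfl | hab
    · refine ⟨b, hb1, ⟨?_, ?_⟩, Or.inr (topAt_forces hd hwx hb1 tb)⟩
      · obtain ⟨i, hi, hit⟩ := tb.1
        refine ⟨i, hi, ?_⟩
        rw [dvec_xor (x := x),
          hsuppa i (le_trans (Nat.pow_le_pow_right (by norm_num) (by omega)) hi), hit]
        rfl
      · intro i hi
        rw [dvec_xor (x := x),
          hsuppa i (le_trans (Nat.pow_le_pow_right (by norm_num) (by omega)) hi),
          hsuppb i hi]
        rfl
    · refine ⟨a, ha1, topAt_of_big ?_ ?_ hnz, Or.inl (topAt_forces hd hvx ha1 ta)⟩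
      · intro i hi
        rw [dvec_xor (x := x), dvec_xor (x := x) (i := i + 2 ^ a),
          hsyma i hi, hsymb i hi]
      · intro i hi
        rw [dvec_xor (x := x), hsuppa i hi, hsuppb i hi]
        rfl
    · refine ⟨a, ha1, ⟨?_, ?_⟩, Or.inl (topAt_forces hd hvx ha1 ta)⟩
      · obtain ⟨i, hi, hit⟩ := ta.1
        refine ⟨i, hi, ?_⟩
        rw [dvec_xor (x := x), hit,
          hsuppb i (le_trans (Nat.pow_le_pow_right (by norm_num) (by omega)) hi)]
        rfl
      · intro i hi
        rw [dvec_xor (x := x), hsuppa i hi,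
          hsuppb i (le_trans (Nat.pow_le_pow_right (by norm_num) (by omega)) hi)]
        rfl

theorem small_pair_ext {δ δ' : ℕ → Bool} (h : SuppLt 2 δ) (h' : SuppLt 2 δ')
    (h0 : δ 0 = δ' 0) (h1 : δ 1 = δ' 1) : ∀ i, δ i = δ' i := by
  intro i
  match i with
  | 0 => exact h0
  | 1 => exact h1
  | (n + 2) => rw [h _ (by omega), h' _ (by omega)]

theorem small_nonzero {δ : ℕ → Bool} (h : SuppLt 2 δ) (hnz : Nonzero δ) :
    δ 0 = true ∨ δ 1 = true := by
  obtain ⟨i, hi⟩ := hnz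
  match i with
  | 0 => exact Or.inl hi
  | 1 => exact Or.inr hi
  | (n + 2) => rw [h _ (by omega)] at hi; exact absurd hi (by decide)

theorem pair_ne {v u x : V d} (hs : SuppLt 2 (dvec v u)) (hs' : SuppLt 2 (dvec v x))
    (hne : u ≠ x) : (dvec v u 0, dvec v u 1) ≠ (dvec v x 0, dvec v x 1) := by
  intro hp
  rw [Prod.mk.injEq] at hp
  exact hne (dvec_inj (small_pair_ext hs hs' hp.1 hp.2))

theorem bool_three (a0 a1 b0 b1 c0 c1 : Bool)
    (hab : (a0, a1) ≠ (b0, b1)) (hac : (a0, a1) ≠ (c0, c1)) (hbc : (b0, b1) ≠ (c0, c1))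
    (ha : a0 = true ∨ a1 = true) (hb : b0 = true ∨ b1 = true) (hc : c0 = true ∨ c1 = true) :
    xor (xor a0 b0) c0 = false ∧ xor (xor a1 b1) c1 = false := by
  revert hab hac hbc ha hb hc
  revert a0 a1 b0 b1 c0 c1
  decide

theorem bool_solve (t a b c A B C : Bool) (h1 : t = xor a A) (h2 : t = xor b B)
    (h3 : t = xor c C) (h4 : xor (xor a b) c = false) (h5 : xor (xor A B) C = false) :
    t = false := by
  revert h1 h2 h3 h4 h5
  revert t a b c A B C
  decide

theorem three_in_two {α : Type*} {a b c p q : α} (hab : a ≠ b) (hac : a ≠ c) (hbc : b ≠ c)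
    (ha : a = p ∨ a = q) (hb : b = p ∨ b = q) (hc : c = p ∨ c = q) : False := by
  rcases ha with rfl | rfl <;> rcases hb with rfl | rfl <;> rcases hc with rfl | rfl <;>
    simp_all

end Stmt9Aux

/-- any two distinct neighbors `v, w` of a vertex `u` have at most one
common neighbor other than `u`. -/
theorem stmt9 (d : ℕ) (hd : 2 ≤ d) (u v w : V d)
    (hv : (graph d).Adj u v) (hw : (graph d).Adj u w) (hvw : v ≠ w) :
    (((graph d).neighborSet v ∩ (graph d).neighborSet w) \ {u}).ncard ≤ 1 := by
  have hd1 : 1 ≤ d := by omega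
  rw [Set.ncard_le_one_iff (Set.toFinite _)]
  intro x y hx hy
  by_contra hxy
  simp only [Set.mem_diff, Set.mem_inter_iff, SimpleGraph.mem_neighborSet,
    Set.mem_singleton_iff] at hx hy
  obtain ⟨⟨hvx, hwx⟩, hxu⟩ := hx
  obtain ⟨⟨hvy, hwy⟩, hyu⟩ := hy
  have hvu : (graph d).Adj v u := hv.symm
  have hwu : (graph d).Adj w u := hw.symm
  have hnz : Nonzero (dvec v w) := by
    by_contra hc
    rw [Nonzero] at hc
    push_neg at hc
    exact hvw (dvec_eq fun i => by simpa using hc i)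
  have Pu := pair_lemma hd1 hvu hwu hnz
  have Px := pair_lemma hd1 hvx hwx hnz
  have Py := pair_lemma hd1 hvy hwy hnz
  rcases Pu with ⟨hD, hsvu, hswu, hnvu, hnwu⟩ | ⟨j, hj1, htj, hsu⟩
  · rcases Px with ⟨-, hsvx, hswx, hnvx, hnwx⟩ | ⟨j, hj1, htj, -⟩
    swap
    · exact topAt_not_small hj1 htj hD
    rcases Py with ⟨-, hsvy, hswy, hnvy, hnwy⟩ | ⟨j, hj1, htj, -⟩
    swap
    · exact topAt_not_small hj1 htj hD
    have hux : u ≠ x := Ne.symm hxu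
    have huy : u ≠ y := Ne.symm hyu
    have Xv := bool_three _ _ _ _ _ _ (pair_ne hsvu hsvx hux) (pair_ne hsvu hsvy huy)
      (pair_ne hsvx hsvy hxy) (small_nonzero hsvu hnvu) (small_nonzero hsvx hnvx)
      (small_nonzero hsvy hnvy)
    have Xw := bool_three _ _ _ _ _ _ (pair_ne hswu hswx hux) (pair_ne hswu hswy huy)
      (pair_ne hswx hswy hxy) (small_nonzero hswu hnwu) (small_nonzero hswx hnwx)
      (small_nonzero hswy hnwy)
    obtain ⟨i, hi⟩ := hnz
    have hzero : dvec v w i = false := by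
      match i with
      | 0 =>
        exact bool_solve _ _ _ _ _ _ _ (dvec_xor (x := u) 0) (dvec_xor (x := x) 0) (dvec_xor (x := y) 0) Xv.1 Xw.1
      | 1 =>
        exact bool_solve _ _ _ _ _ _ _ (dvec_xor (x := u) 1) (dvec_xor (x := x) 1) (dvec_xor (x := y) 1) Xv.2 Xw.2
      | (n + 2) =>
        exact hD _ (by omega)
    rw [hzero] at hi
    exact absurd hi (by decide)
  · rcases Px with ⟨hD, -, -, -, -⟩ | ⟨jx, hjx1, htjx, hsx⟩
    · exact topAt_not_small hj1 htj hD
    rcases Py with ⟨hD, -, -, -, -⟩ | ⟨jy, hjy1, htjy, hsy⟩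
    · exact topAt_not_small hj1 htj hD
    obtain rfl := topAt_unique htjx htj
    obtain rfl := topAt_unique htjy htj
    exact three_in_two (Ne.symm hxu) (Ne.symm hyu) hxy hsu hsx hsy


end FDSC
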